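/- With Gaussian appearance weights, the volume satisfies vol(S|G_data) = (2πσ²)^{d/2} |S| |V| ⟨g_S, g_V⟩ for any nonempty S ⊆ V. -/

import Mathlib

/-!
Expanding both kernel density estimates turns `⟨g_S, g_V⟩` into the average over pairs `(i, j)`
of `∫ K_{σ²}(I i - c) K_{σ²}(I j - c) dc`. By Apollonius's theorem the product of the two
Gaussians is a Gaussian centred at the midpoint of `I i` and `I j` times
`exp (-‖I i - I j‖² / (2σ²)) = w i j`, so each integral equals `(2πσ²)^{-d/2} w i j`.
-/

open Real MeasureTheory Finset Module

section Gaussian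

variable {E : Type*} [NormedAddCommGroup E] [InnerProductSpace ℝ E]

lemma norm_sub_sq_add_norm_sub_sq (a b c : E) :
    ‖a - c‖ ^ 2 + ‖b - c‖ ^ 2 = 2 * ‖c - midpoint ℝ a b‖ ^ 2 + ‖a - b‖ ^ 2 / 2 := by
  have h :=
    EuclideanGeometry.dist_sq_add_dist_sq_eq_two_mul_dist_midpoint_sq_add_half_dist_sq c a b
  simp only [dist_eq_norm, norm_sub_rev c a, norm_sub_rev c b] at h
  linarith

lemma exp_mul_exp_eq_exp_midpoint (s : ℝ) (a b c : E) :
    exp (-‖a - c‖ ^ 2 / s) * exp (-‖b - c‖ ^ 2 / s) =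
      exp (-(2 / s) * ‖c - midpoint ℝ a b‖ ^ 2) * exp (-‖a - b‖ ^ 2 / (2 * s)) := by
  rw [← exp_add, ← exp_add]
  congr 1
  linear_combination (-1 / s) * norm_sub_sq_add_norm_sub_sq a b c

noncomputable def gaussKernel (s : ℝ) (u : E) : ℝ :=
  (π * s) ^ (-(finrank ℝ E : ℝ) / 2) * exp (-‖u‖ ^ 2 / s)

variable [FiniteDimensional ℝ E] [MeasurableSpace E] [BorelSpace E]

lemma integrable_exp_neg_mul_sq_norm {k : ℝ} (hk : 0 < k) :
    Integrable fun v : E ↦ exp (-k * ‖v‖ ^ 2) :=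
  Integrable.of_integral_ne_zero <| by
    rw [GaussianFourier.integral_rexp_neg_mul_sq_norm hk]; positivity

lemma integrable_exp_mul_exp {s : ℝ} (hs : 0 < s) (a b : E) :
    Integrable fun c : E ↦ exp (-‖a - c‖ ^ 2 / s) * exp (-‖b - c‖ ^ 2 / s) := by
  simp_rw [exp_mul_exp_eq_exp_midpoint s a b]
  exact ((integrable_exp_neg_mul_sq_norm (by positivity)).comp_sub_right _).mul_const _

lemma integral_exp_mul_exp {s : ℝ} (hs : 0 < s) (a b : E) :
    ∫ c : E, exp (-‖a - c‖ ^ 2 / s) * exp (-‖b - c‖ ^ 2 / s) =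
      (π * s / 2) ^ (finrank ℝ E / 2 : ℝ) * exp (-‖a - b‖ ^ 2 / (2 * s)) := by
  simp_rw [exp_mul_exp_eq_exp_midpoint s a b]
  rw [integral_mul_const, integral_sub_right_eq_self (fun c ↦ exp (-(2 / s) * ‖c‖ ^ 2)),
    GaussianFourier.integral_rexp_neg_mul_sq_norm (by positivity)]
  congr 2
  field_simp

lemma integrable_gaussKernel_mul_gaussKernel {s : ℝ} (hs : 0 < s) (a b : E) :
    Integrable fun c : E ↦ gaussKernel s (a - c) * gaussKernel s (b - c) := by
  simp_rw [gaussKernel, mul_mul_mul_comm]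
  exact (integrable_exp_mul_exp hs a b).const_mul _

/-- The convolution identity `K_s * K_s = K_{2s}`, evaluated at `a - b`. -/
lemma integral_gaussKernel_mul_gaussKernel {s : ℝ} (hs : 0 < s) (a b : E) :
    ∫ c : E, gaussKernel s (a - c) * gaussKernel s (b - c) =
      (2 * π * s) ^ (-(finrank ℝ E : ℝ) / 2) * exp (-‖a - b‖ ^ 2 / (2 * s)) := by
  simp_rw [gaussKernel, mul_mul_mul_comm]
  rw [integral_const_mul, integral_exp_mul_exp hs, ← mul_assoc]
  congr 1
  have hπs : 0 < π * s := by positivity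
  rw [neg_div, rpow_neg hπs.le, rpow_neg (by positivity), div_rpow hπs.le zero_le_two,
    mul_assoc 2, mul_rpow zero_le_two hπs.le]
  have : (2 : ℝ) ^ (finrank ℝ E / 2 : ℝ) ≠ 0 := by positivity
  have : (π * s) ^ (finrank ℝ E / 2 : ℝ) ≠ 0 := by positivity
  field_simp

end Gaussian

lemma integral_sum_mul_sum {α ι κ : Type*} [MeasurableSpace α] {μ : Measure α}
    (s : Finset ι) (t : Finset κ) (f : ι → α → ℝ) (h : κ → α → ℝ)
    (hfh : ∀ i ∈ s, ∀ j ∈ t, Integrable (fun x ↦ f i x * h j x) μ) :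
    ∫ x, (∑ i ∈ s, f i x) * (∑ j ∈ t, h j x) ∂μ =
      ∑ i ∈ s, ∑ j ∈ t, ∫ x, f i x * h j x ∂μ := by
  simp_rw [sum_mul_sum]
  rw [integral_finsetSum _ fun i hi ↦ integrable_finsetSum _ (hfh i hi)]
  exact sum_congr rfl fun i hi ↦ integral_finsetSum _ (hfh i hi)

theorem dense_vol_eq_kde_inner_general (d : ℕ) (V : Type*) [Fintype V]
    (I : V → EuclideanSpace ℝ (Fin d)) (σ : ℝ) (hσ : 0 < σ)
    (S : Finset V)
    (w : V → V → ℝ) (hw : ∀ i j, w i j = Real.exp (-‖I i - I j‖^2 / (2 * σ^2)))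
    (g : Finset V → EuclideanSpace ℝ (Fin d) → ℝ)
    (hg : ∀ T c, g T c = (1 / (T.card : ℝ)) *
        ∑ i ∈ T, (π * σ^2) ^ (-(d:ℝ)/2) * Real.exp (-‖I i - c‖^2 / σ^2)) :
    ∑ i ∈ S, ∑ j ∈ Finset.univ, w i j =
      (2 * π * σ^2) ^ ((d:ℝ)/2) * (S.card : ℝ) * (Fintype.card V : ℝ) *
        ∫ c : EuclideanSpace ℝ (Fin d), g S c * g Finset.univ c := by
  rcases S.eq_empty_or_nonempty with rfl | ⟨i₀, hi₀⟩
  · simp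
  have hV : (Fintype.card V : ℝ) ≠ 0 :=
    Nat.cast_ne_zero.mpr (Fintype.card_pos_iff.mpr ⟨i₀⟩).ne'
  have hS : (S.card : ℝ) ≠ 0 := Nat.cast_ne_zero.mpr (card_ne_zero_of_mem hi₀)
  have hgK :
      ∀ T c, g T c = (T.card : ℝ)⁻¹ * ∑ i ∈ T, gaussKernel (σ ^ 2) (I i - c) := by
    simp [hg, gaussKernel]
  have hint : ∫ c, g S c * g univ c = (S.card : ℝ)⁻¹ * (Fintype.card V : ℝ)⁻¹ *
      ((2 * π * σ ^ 2) ^ (-(d : ℝ) / 2) * ∑ i ∈ S, ∑ j, w i j) := by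
    simp_rw [hgK, mul_mul_mul_comm _ (∑ i ∈ S, _), card_univ]
    rw [integral_const_mul, integral_sum_mul_sum _ _ _ _ fun i _ j _ ↦
      integrable_gaussKernel_mul_gaussKernel (by positivity) _ _]
    simp [integral_gaussKernel_mul_gaussKernel (pow_pos hσ 2), hw, mul_sum, two_mul]
  rw [hint, neg_div, rpow_neg (by positivity)]
  have : (2 * π * σ ^ 2) ^ ((d : ℝ) / 2) ≠ 0 := by positivity
  field_simp

theorem dense_vol_eq_kde_inner (d : ℕ) (V : Type*) [Fintype V] [DecidableEq V]
    (I : V → EuclideanSpace ℝ (Fin d)) (σ : ℝ) (hσ : 0 < σ)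
    (S : Finset V) (hS : S.Nonempty)
    (w : V → V → ℝ) (hw : ∀ i j, w i j = Real.exp (-‖I i - I j‖^2 / (2 * σ^2)))
    (g : Finset V → EuclideanSpace ℝ (Fin d) → ℝ)
    (hg : ∀ T c, g T c = (1 / (T.card : ℝ)) *
        ∑ i ∈ T, (π * σ^2) ^ (-(d:ℝ)/2) * Real.exp (-‖I i - c‖^2 / σ^2)) :
    ∑ i ∈ S, ∑ j ∈ Finset.univ, w i j =
      (2 * π * σ^2) ^ ((d:ℝ)/2) * (S.card : ℝ) * (Fintype.card V : ℝ) *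
        ∫ c : EuclideanSpace ℝ (Fin d), g S c * g Finset.univ c :=
  dense_vol_eq_kde_inner_general d V I σ hσ S w hw g hg
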